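/- arXiv:1211.0579 — 2 statements merged into one kernel-verified Lean document; each statement's English description precedes it below -/
import Mathlib

section
/- The subspace L spanned by the kernels of the regular forms of the pencil is bi-isotropic: for all u, v ∈ L one has A(u,v) = 0 and B(u,v) = 0, and consequently (A + λB)(u,v) = 0 for every λ ∈ ℂ. -/
/-!
Let `λ` be regular, `C = A + λB`, and suppose `u, v ∈ ker C` with `B u v ≠ 0`. Take a complement
`W` of `ker C`, on which `C` is nondegenerate. The Gram matrix of `C + tB` on `(u, v, basis of W)`
is `t` times `B` on the rows of `u, v`; dividing those rows by `t` leaves a matrix polynomial in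
`t` whose value at `t = 0` is block triangular with determinant `B(u,v)² · det C|_W ≠ 0`. So for
generic `t` the form `A + (λ + t)B` has rank at least `r + 2`, contradicting maximality of `r`.
For kernels of two distinct regular values `λ ≠ μ`, alternation gives `(A + λB)(u,v) = 0 =
(A + μB)(u,v)`, hence `B u v = 0`; in both cases `A u v = -λ B u v = 0`, and bilinearity extends
this from the kernels to their span.
-/

noncomputable def formRank {V : Type*} [AddCommGroup V] [Module ℂ V]
    (C : V →ₗ[ℂ] V →ₗ[ℂ] ℂ) : ℕ :=
  Module.finrank ℂ V - Module.finrank ℂ (LinearMap.ker C)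

open Module LinearMap

section BilinearForm

variable {K V : Type*} [Field K] [AddCommGroup V] [Module K V]

theorem Matrix.exists_det_smul_add_ne_zero [Infinite K] {n : Type*} [Fintype n] [DecidableEq n]
    (M N : Matrix n n K) (hM : M.det ≠ 0) (s : Finset K) : ∃ t ∉ s, (t • N + M).det ≠ 0 := by
  classical
  open Polynomial in
  set p : K[X] := ((X : K[X]) • N.map C + M.map C).det with hp_def
  have hp : p ≠ 0 := fun h => hM (by rw [← coeff_det_X_add_C_zero N M, ← hp_def, h, coeff_zero])
  obtain ⟨t, ht⟩ := Infinite.exists_notMem_finset (s ∪ p.roots.toFinset)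
  rw [Finset.mem_union, not_or, Multiset.mem_toFinset, mem_roots hp, IsRoot.def] at ht
  refine ⟨t, ht.1, fun h => ht.2 ?_⟩
  rw [← coe_evalRingHom, RingHom.map_det, ← h]
  congr 1
  ext i j
  simp [RingHom.mapMatrix_apply, mul_comm t]

def LinearMap.gram {ι κ : Type*} (F : V →ₗ[K] V →ₗ[K] K) (x : ι → V) (y : κ → V) :
    Matrix ι κ K :=
  Matrix.of fun i j => F (x i) (y j)

@[simp]
theorem LinearMap.gram_apply {ι κ : Type*} (F : V →ₗ[K] V →ₗ[K] K) (x : ι → V) (y : κ → V)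
    (i : ι) (j : κ) : F.gram x y i j = F (x i) (y j) :=
  rfl

theorem card_le_finrank_range_of_det_gram_ne_zero [FiniteDimensional K V] {ι : Type*} [Fintype ι]
    [DecidableEq ι] (F : V →ₗ[K] V →ₗ[K] K) (e : ι → V) (he : (F.gram e e).det ≠ 0) :
    Fintype.card ι ≤ finrank K (range F) := by
  let f := F ∘ₗ Fintype.linearCombination K e
  have hvecMul : Function.Injective fun c => Matrix.vecMul c (F.gram e e) :=
    Matrix.vecMul_injective_iff_isUnit.2 ((Matrix.isUnit_iff_isUnit_det _).2 (Ne.isUnit he))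
  have hf : Function.Injective f := by
    refine Function.Injective.of_comp (f := fun φ : V →ₗ[K] K => fun j => φ (e j)) ?_
    convert hvecMul using 2 with c
    ext j
    simp [f, Matrix.vecMul, dotProduct, Fintype.linearCombination_apply, map_sum]
  calc Fintype.card ι = finrank K (range f) := by
        rw [finrank_range_of_inj hf, finrank_fintype_fun_eq_card]
    _ ≤ finrank K (range F) := Submodule.finrank_mono (range_comp_le_range _ _)

theorem det_gram_ne_zero_of_isCompl_ker {ι : Type*} [Fintype ι] [DecidableEq ι]
    (F : V →ₗ[K] V →ₗ[K] K) (hF : F.IsAlt) {W : Submodule K V} (hW : IsCompl (ker F) W)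
    (b : Basis ι K W) : (F.gram (fun i => (b i : V)) fun i => (b i : V)).det ≠ 0 := by
  have hdisj : Disjoint W (BilinForm.orthogonal F W) := by
    refine Submodule.disjoint_def.2 fun x hxW hx => ?_
    have hker : ker F ⊔ W ≤ ker (F x) :=
      sup_le (fun k hk => (hF.eq_iff).1 (by rw [mem_ker.1 hk]; rfl))
        fun w hw => (hF.eq_iff).1 (hx w hw)
    rw [hW.sup_eq_top, top_le_iff, ker_eq_top] at hker
    exact (Submodule.disjoint_def.1 hW.disjoint) x (mem_ker.2 hker) hxW
  convert (BilinForm.nondegenerate_iff_det_ne_zero b).1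
    (BilinForm.nondegenerate_restrict_of_disjoint_orthogonal F hF.isRefl hdisj) using 2
  ext i j
  simp

theorem exists_finrank_range_add_card_le_finrank_range [FiniteDimensional K V] [Infinite K]
    {κ : Type*} [Fintype κ] [DecidableEq κ] (C B : V →ₗ[K] V →ₗ[K] K) (hC : C.IsAlt)
    (k : κ → V) (hk : ∀ a, C (k a) = 0) (hB : (B.gram k k).det ≠ 0) :
    ∃ t : K, finrank K (range C) + Fintype.card κ ≤ finrank K (range (C + t • B)) := by
  obtain ⟨W, hW⟩ := Submodule.exists_isCompl (ker C)
  let b := Module.finBasis K W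
  let w : Fin (finrank K W) → V := fun i => b i
  have hW_finrank : finrank K W = finrank K (range C) :=
    ((Submodule.quotientEquivOfIsCompl _ _ hW).symm.trans C.quotKerEquivRange).finrank_eq
  have hwk : ∀ i a, C (w i) (k a) = 0 := fun i a => hC.eq_iff.1 (by rw [hk]; rfl)
  let e : κ ⊕ Fin (finrank K W) → V := Sum.elim k w
  let M := Matrix.fromBlocks (B.gram k k) (B.gram k w) 0 (C.gram w w)
  let N : Matrix (κ ⊕ Fin (finrank K W)) (κ ⊕ Fin (finrank K W)) K :=
    Matrix.fromBlocks 0 0 (B.gram w k) (B.gram w w)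
  have hM : M.det ≠ 0 := by
    rw [Matrix.det_fromBlocks_zero₂₁]
    exact mul_ne_zero hB (det_gram_ne_zero_of_isCompl_ker C hC hW b)
  obtain ⟨t, ht0, ht⟩ := M.exists_det_smul_add_ne_zero N hM {0}
  rw [Finset.mem_singleton] at ht0
  -- the rows of `k` are `t` times rows of `B`, since `C` vanishes on `k`
  have hgram : (C + t • B).gram e e =
      Matrix.of fun i j => Sum.elim (fun _ => t) (fun _ => 1) i * (t • N + M) i j := by
    ext (a | i) (a | j) <;> simp [e, M, N, hk, hwk, add_comm]
  have hdet : ((C + t • B).gram e e).det ≠ 0 := by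
    rw [hgram, Matrix.det_mul_column, Fintype.prod_sum_type]
    simp [ht0, ht]
  refine ⟨t, ?_⟩
  simpa [hW_finrank, add_comm] using card_le_finrank_range_of_det_gram_ne_zero _ e hdet

end BilinearForm

theorem LinearMap.apply_eq_zero_of_mem_span {R M N : Type*} [CommSemiring R] [AddCommMonoid M]
    [Module R M] [AddCommMonoid N] [Module R N] (F : M →ₗ[R] M →ₗ[R] N) {s : Set M}
    (hs : ∀ x ∈ s, ∀ y ∈ s, F x y = 0) {x y : M} (hx : x ∈ Submodule.span R s)
    (hy : y ∈ Submodule.span R s) : F x y = 0 := by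
  have hF : ∀ x ∈ s, Submodule.span R s ≤ ker (F x) :=
    fun x hx => Submodule.span_le.2 fun y hy => hs x hx y hy
  exact (Submodule.span_le (p := ker (F.flip y))).2 (fun x hx => hF x hx hy) hx

section Pencil

variable {V : Type*} [AddCommGroup V] [Module ℂ V] [FiniteDimensional ℂ V]
  {A B : V →ₗ[ℂ] V →ₗ[ℂ] ℂ} {r : ℕ}

theorem formRank_eq_finrank_range (C : V →ₗ[ℂ] V →ₗ[ℂ] ℂ) :
    formRank C = finrank ℂ (range C) := by
  have := C.finrank_range_add_finrank_ker
  unfold formRank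
  omega

theorem apply_eq_zero_of_mem_ker_of_formRank_eq (hA : A.IsAlt) (hB : B.IsAlt)
    (hr : ∀ l : ℂ, formRank (A + l • B) ≤ r) {l : ℂ} (hl : formRank (A + l • B) = r) {u v : V}
    (hu : u ∈ ker (A + l • B)) (hv : v ∈ ker (A + l • B)) : B u v = 0 := by
  by_contra huv
  have hC : (A + l • B).IsAlt := fun x => by simp [hA x, hB x]
  have hdet : (B.gram ![u, v] ![u, v]).det ≠ 0 := by
    simpa [Matrix.det_fin_two, hB u, hB v, ← hB.neg u v] using huv
  obtain ⟨t, ht⟩ := exists_finrank_range_add_card_le_finrank_range (A + l • B) B hC ![u, v]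
    (Fin.forall_fin_two.2 ⟨hu, hv⟩) hdet
  have := hr (l + t)
  rw [add_smul, ← add_assoc, formRank_eq_finrank_range] at this
  rw [formRank_eq_finrank_range] at hl
  simp only [Fintype.card_fin] at ht
  omega

theorem apply_eq_zero_of_mem_ker_of_mem_ker (hA : A.IsAlt) (hB : B.IsAlt)
    (hr : ∀ l : ℂ, formRank (A + l • B) ≤ r) {l m : ℂ} (hl : formRank (A + l • B) = r)
    (hm : formRank (A + m • B) = r) {u v : V} (hu : u ∈ ker (A + l • B))
    (hv : v ∈ ker (A + m • B)) : A u v = 0 ∧ B u v = 0 := by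
  have hlu : A u v + l * B u v = 0 := by simpa using congr($(mem_ker.1 hu) v)
  have hBuv : B u v = 0 := by
    obtain rfl | hlm := eq_or_ne l m
    · exact apply_eq_zero_of_mem_ker_of_formRank_eq hA hB hr hl hu hv
    have hmv : A v u + m * B v u = 0 := by simpa using congr($(mem_ker.1 hv) u)
    rw [← hA.neg, ← hB.neg] at hmv
    exact (mul_eq_zero.1 (by linear_combination hlu + hmv : (l - m) * B u v = 0)).resolve_left
      (sub_ne_zero.2 hlm)
  exact ⟨by linear_combination hlu - l * hBuv, hBuv⟩

end Pencil

theorem L_bi_isotropic_general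
    (V : Type*) [AddCommGroup V] [Module ℂ V] [FiniteDimensional ℂ V]
    (A B : V →ₗ[ℂ] V →ₗ[ℂ] ℂ)
    (hA : ∀ v : V, A v v = 0) (hB : ∀ v : V, B v v = 0)
    (r : ℕ)
    (hr_le : ∀ l : ℂ, formRank (A + l • B) ≤ r)
    (L : Submodule ℂ V)
    (hL : L = Submodule.span ℂ
      (⋃ l ∈ {l : ℂ | formRank (A + l • B) = r}, (LinearMap.ker (A + l • B) : Set V))) :
    ∀ u ∈ L, ∀ v ∈ L, A u v = 0 ∧ B u v = 0 ∧ ∀ l : ℂ, (A + l • B) u v = 0 := by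
  set S := ⋃ l ∈ {l : ℂ | formRank (A + l • B) = r}, (ker (A + l • B) : Set V) with hS
  have hkers : ∀ x ∈ S, ∀ y ∈ S, A x y = 0 ∧ B x y = 0 := by
    simp only [hS, Set.mem_iUnion, SetLike.mem_coe]
    rintro x ⟨l, hl, hx⟩ y ⟨m, hm, hy⟩
    exact apply_eq_zero_of_mem_ker_of_mem_ker hA hB hr_le hl hm hx hy
  subst hL
  intro u hu v hv
  have hAuv := A.apply_eq_zero_of_mem_span (fun x hx y hy => (hkers x hx y hy).1) hu hv
  have hBuv := B.apply_eq_zero_of_mem_span (fun x hx y hy => (hkers x hx y hy).2) hu hv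
  exact ⟨hAuv, hBuv, fun l => by simp [hAuv, hBuv]⟩

/-- The subspace `L` spanned by the kernels of the regular forms of the pencil
(`λ` is regular when `rank (A + λB) = r`, the rank of the pencil) is bi-isotropic:
`A` and `B` (and hence every form `A + λB` of the pencil) vanish on pairs of
vectors from `L`. -/
theorem L_bi_isotropic
    (V : Type*) [AddCommGroup V] [Module ℂ V] [FiniteDimensional ℂ V]
    (A B : V →ₗ[ℂ] V →ₗ[ℂ] ℂ)
    (hA : ∀ v : V, A v v = 0) (hB : ∀ v : V, B v v = 0)
    (r : ℕ)
    (hr_le : ∀ l : ℂ, formRank (A + l • B) ≤ r)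
    (hr_ex : ∃ l : ℂ, formRank (A + l • B) = r)
    (L : Submodule ℂ V)
    (hL : L = Submodule.span ℂ
      (⋃ l ∈ {l : ℂ | formRank (A + l • B) = r}, (LinearMap.ker (A + l • B) : Set V))) :
    ∀ u ∈ L, ∀ v ∈ L, A u v = 0 ∧ B u v = 0 ∧ ∀ l : ℂ, (A + l • B) u v = 0 :=
  L_bi_isotropic_general V A B hA hB r hr_le L hL
end

section
/- Let μ ∈ ℂ with μ ≠ 0, set K = ker(A + μB), c = dim V − r, and let ker(A|_K) = {v ∈ K : A(v,w) = 0 for all w ∈ K}. Then dim K ≥ c, dim ker(A|_K) ≥ c, and both differences dim K − c and dim ker(A|_K) − c are even (twice the number of Jordan μ-blocks, respectively twice the number of non-trivial Jordan μ-blocks, of the pencil). -/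
open LinearMap Matrix Polynomial

namespace Matrix

variable {n R : Type*} [Fintype n] [DecidableEq n] [CommRing R] [IsDomain R]

theorem even_card_of_transpose_eq_neg [NeZero (2 : R)] {M : Matrix n n R} (hM : Mᵀ = -M)
    (hdet : M.det ≠ 0) : Even (Fintype.card n) := by
  by_contra hodd
  have h : M.det = -M.det := by
    conv_lhs => rw [← det_transpose, hM, det_neg, (Nat.not_even_iff_odd.mp hodd).neg_one_pow]
    ring
  have h2 : (2 : R) * M.det = 0 := by linear_combination h
  exact hdet ((mul_eq_zero.mp h2).resolve_left two_ne_zero)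

theorem exists_ne_zero_det_add_smul_ne_zero [Infinite R] (P Q : Matrix n n R)
    (hP : P.det ≠ 0) : ∃ t : R, t ≠ 0 ∧ (P + t • Q).det ≠ 0 := by
  set p : R[X] := (P.map C + (X : R[X]) • Q.map C).det
  have heval : ∀ t, p.eval t = (P + t • Q).det := fun t => by
    rw [← coe_evalRingHom, RingHom.map_det]
    congr 1
    ext i j
    simp only [RingHom.mapMatrix_apply, map_apply, add_apply, smul_apply, smul_eq_mul,
      coe_evalRingHom, eval_add, eval_mul, eval_C, eval_X]
  have hp : X * p ≠ 0 := mul_ne_zero X_ne_zero fun h => hP <| by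
    simpa [h] using (heval 0).symm
  obtain ⟨t, ht⟩ : ∃ t, (X * p).eval t ≠ 0 := by
    by_contra! h
    exact hp (zero_of_eval_zero _ h)
  rw [eval_mul, eval_X, heval] at ht
  exact ⟨t, left_ne_zero_of_mul ht, right_ne_zero_of_mul ht⟩

end Matrix

namespace LinearMap.IsAlt

variable {R M N : Type*} [CommRing R] [AddCommGroup M] [Module R M] [AddCommGroup N]
  [Module R N] {D E : M →ₗ[R] M →ₗ[R] R}

theorem add_smul (hD : D.IsAlt) (hE : E.IsAlt) (l : R) : (D + l • E).IsAlt :=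
  fun v => by simp [hD v, hE v]

theorem compl₁₂_self (hD : D.IsAlt) (f : N →ₗ[R] M) : (D.compl₁₂ f f).IsAlt :=
  fun v => hD (f v)

end LinearMap.IsAlt

section FormRank

variable {V : Type*} [AddCommGroup V] [Module ℂ V] [FiniteDimensional ℂ V]

theorem formRank_add_finrank_ker (D : V →ₗ[ℂ] V →ₗ[ℂ] ℂ) :
    formRank D + Module.finrank ℂ (ker D) = Module.finrank ℂ V :=
  Nat.sub_add_cancel (Submodule.finrank_le _)

theorem card_le_formRank_of_det_ne_zero {ι : Type*} [Fintype ι] [DecidableEq ι]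
    (D : V →ₗ[ℂ] V →ₗ[ℂ] ℂ) (x y : ι → V)
    (h : (of fun i j => D (x i) (y j)).det ≠ 0) :
    Fintype.card ι ≤ formRank D := by
  have hli : LinearIndependent ℂ (fun i => D (x i)) := by
    rw [Fintype.linearIndependent_iff]
    intro c hc
    by_contra! hne
    refine h (exists_vecMul_eq_zero_iff.mp ⟨c, fun hc0 => ?_, ?_⟩)
    · obtain ⟨i, hi⟩ := hne
      exact hi (congrFun hc0 i)
    · ext j
      simpa [vecMul, dotProduct] using LinearMap.congr_fun hc (y j)
  have hspan : Submodule.span ℂ (Set.range fun i => D (x i)) ≤ range D :=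
    Submodule.span_le.mpr (Set.range_subset_iff.mpr fun i => mem_range_self D (x i))
  calc Fintype.card ι = Module.finrank ℂ (Submodule.span ℂ (Set.range fun i => D (x i))) :=
        (finrank_span_eq_card hli).symm
    _ ≤ Module.finrank ℂ (range D) := Submodule.finrank_mono hspan
    _ = formRank D := by
      have := finrank_range_add_finrank_ker D
      have := formRank_add_finrank_ker D
      omega

variable {D : V →ₗ[ℂ] V →ₗ[ℂ] ℂ}

theorem LinearMap.IsAlt.exists_det_gram_ne_zero (hD : D.IsAlt) :
    ∃ v : Fin (formRank D) → V, (of fun i j => D (v i) (v j)).det ≠ 0 := by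
  obtain ⟨U, hU⟩ := Submodule.exists_isCompl (ker D)
  have hsep : (D.domRestrict₁₂ U U).SeparatingLeft := by
    intro u hu
    have hker : (u : V) ∈ ker D := by
      ext v
      have hv : v ∈ ker D ⊔ U := hU.sup_eq_top ▸ Submodule.mem_top
      obtain ⟨k, hk, u', hu', rfl⟩ := Submodule.mem_sup.mp hv
      have hku : D u k = 0 := by rw [← hD.neg, LinearMap.mem_ker.mp hk, zero_apply, neg_zero]
      simpa [hku, domRestrict₁₂_apply] using hu ⟨u', hu'⟩
    exact Subtype.ext (Submodule.disjoint_def.mp hU.disjoint _ hker u.2)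
  have hdim : Module.finrank ℂ U = formRank D := by
    have := Submodule.finrank_add_eq_of_isCompl hU
    have := formRank_add_finrank_ker D
    omega
  let b : Module.Basis (Fin (formRank D)) ℂ U := (Module.finBasis ℂ U).reindex (finCongr hdim)
  refine ⟨fun i => b i, ?_⟩
  convert (separatingLeft_iff_det_ne_zero b).mp hsep using 2
  ext i j
  simp [toMatrix₂_apply, domRestrict₁₂_apply]

theorem LinearMap.IsAlt.even_formRank (hD : D.IsAlt) : Even (formRank D) := by
  obtain ⟨v, hv⟩ := hD.exists_det_gram_ne_zero
  simpa using even_card_of_transpose_eq_neg (M := of fun i j => D (v i) (v j))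
    (by ext i j; exact (hD.neg _ _).symm) hv

theorem exists_formRank_add_formRank_restrict_ker_le {A B : V →ₗ[ℂ] V →ₗ[ℂ] ℂ}
    (hA : A.IsAlt) (hB : B.IsAlt) {μ : ℂ} (hμ : μ ≠ 0) :
    ∃ l : ℂ, formRank (A + μ • B) +
      formRank (A.compl₁₂ (ker (A + μ • B)).subtype (ker (A + μ • B)).subtype) ≤
        formRank (A + l • B) := by
  set C := A + μ • B
  set K := ker C
  set AK := A.compl₁₂ K.subtype K.subtype
  have hC : C.IsAlt := hA.add_smul hB μ
  obtain ⟨w, hw⟩ := hC.exists_det_gram_ne_zero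
  obtain ⟨u, hu⟩ := (hA.compl₁₂_self K.subtype).exists_det_gram_ne_zero
  have hAu : ∀ a y, A (u a) y = -μ * B (u a) y := fun a y => by
    have := LinearMap.congr_fun (u a).2 y
    simp only [C, LinearMap.add_apply, LinearMap.smul_apply, smul_eq_mul,
      LinearMap.zero_apply] at this
    linear_combination this
  have hCwu : ∀ a b, C (w a) (u b) = 0 := fun a b => by
    rw [← hC.neg, LinearMap.mem_ker.mp (u b).2, LinearMap.zero_apply, neg_zero]
  let x := Sum.elim (fun a => (u a : V)) w
  let P : Matrix _ _ ℂ := of fun i j => Sum.elim (fun a => B (u a)) (fun a => C (w a)) i (x j)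
  let Q : Matrix _ _ ℂ := of fun i j =>
    Sum.elim (fun _ : Fin (formRank AK) => (0 : V →ₗ[ℂ] ℂ)) (fun a => B (w a)) i (x j)
  have hP : P.det ≠ 0 := by
    have hblocks : P = fromBlocks ((-μ⁻¹) • of fun a b => A (u a) (u b))
        (of fun a b => B (u a) (w b)) 0 (of fun a b => C (w a) (w b)) := by
      ext (a | a) (b | b) <;> simp [P, x, hCwu, hAu]
      field_simp
    rw [hblocks, det_fromBlocks_zero₂₁, Matrix.det_smul]
    exact mul_ne_zero (mul_ne_zero (pow_ne_zero _ (by simpa)) hu) hw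
  obtain ⟨t, ht, hPQ⟩ := exists_ne_zero_det_add_smul_ne_zero P Q hP
  refine ⟨μ + t, ?_⟩
  have hgram : (of fun i j => (A + (μ + t) • B) (x i) (x j)) =
      diagonal (Sum.elim (fun _ => t) 1) * (P + t • Q) := by
    ext (a | a) j <;> simp [P, Q, x, C, hAu] <;> ring
  have hdet : (of fun i j => (A + (μ + t) • B) (x i) (x j)).det ≠ 0 := by
    rw [hgram, det_mul, det_diagonal, Fintype.prod_sum_type]
    simpa [ht] using hPQ
  simpa [add_comm] using card_le_formRank_of_det_ne_zero _ x x hdet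

end FormRank

/-- Counting Jordan `μ`-blocks: for a characteristic value `μ ≠ 0` let
`K = ker (A + μB)`, let `c = dim V − r` be the corank of the pencil, and let
`ker (A|_K)` be the kernel of the restriction of `A` to `K`. Then `dim K ≥ c`,
`dim ker (A|_K) ≥ c`, and both differences `dim K − c` and `dim ker (A|_K) − c`
are even (twice the number of Jordan `μ`-blocks, respectively twice the number of
non-trivial Jordan `μ`-blocks, of the pencil). -/
theorem jordan_block_counts
    (V : Type*) [AddCommGroup V] [Module ℂ V] [FiniteDimensional ℂ V]
    (A B : V →ₗ[ℂ] V →ₗ[ℂ] ℂ)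
    (hA : ∀ v : V, A v v = 0) (hB : ∀ v : V, B v v = 0)
    (r : ℕ)
    (hr_le : ∀ l : ℂ, formRank (A + l • B) ≤ r)
    (hr_ex : ∃ l : ℂ, formRank (A + l • B) = r)
    (mu : ℂ) (hmu : mu ≠ 0)
    (c : ℕ) (hc : c = Module.finrank ℂ V - r)
    (K : Submodule ℂ V) (hK : K = LinearMap.ker (A + mu • B))
    (kerAK : ℕ)
    (hkerAK : kerAK = Module.finrank ℂ
      (LinearMap.ker (A.compl₁₂ K.subtype K.subtype))) :
    c ≤ Module.finrank ℂ K ∧ c ≤ kerAK ∧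
      Even (Module.finrank ℂ K - c) ∧ Even (kerAK - c) := by
  subst hc hK hkerAK
  have hAalt : A.IsAlt := hA
  obtain ⟨l, hl⟩ := exists_formRank_add_formRank_restrict_ker_le hA hB hmu
  obtain ⟨l₀, rfl⟩ := hr_ex
  have hr := (hAalt.add_smul hB l₀).even_formRank
  have hC := (hAalt.add_smul hB mu).even_formRank
  have hAK := (hAalt.compl₁₂_self (ker (A + mu • B)).subtype).even_formRank
  have := hr_le l
  have := formRank_add_finrank_ker (A + l₀ • B)
  have := formRank_add_finrank_ker (A + mu • B)
  have := formRank_add_finrank_ker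
    (A.compl₁₂ (ker (A + mu • B)).subtype (ker (A + mu • B)).subtype)
  rw [Nat.even_iff] at hr hC hAK
  refine ⟨by omega, by omega, ?_, ?_⟩ <;> rw [Nat.even_iff] <;> omega
end
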